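/- For every integer k ≥ 2, the end vertex of the path transmits at least as often as its neighbour: for every permutation σ of {1,…,k} exactly one of the vertices 1 and 2 belongs to S(σ), and the number of permutations σ with 1 ∈ S(σ) is greater than or equal to the number of permutations σ with 2 ∈ S(σ). -/

import Mathlib

/-!
The end vertex 1 has 2 as its only neighbour, so independence and maximality of the greedy set
force exactly one of them into it. If 2 is selected, it must have been processed before 1
(otherwise 1 meets no selected neighbour when its turn comes); hence exchanging the priorities
of 1 and 2 injects the permutations selecting 2 into those selecting 1.
-/

/-- The greedy independent set on the path `P_k` (vertex `i : Fin k` stands for vertex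
`i+1` of `{1,…,k}`, and `i`, `i+1` are adjacent): vertices are processed in increasing
order of their priority rank (`σ i` is the rank of vertex `i`, smaller = higher
priority), and a vertex is inserted iff none of its neighbours is already in the set. -/
def pathGreedy (k : ℕ) (σ : Equiv.Perm (Fin k)) : Finset (Fin k) :=
  (List.finRange k).foldl
    (fun D r =>
      if ∀ j ∈ D, ¬ ((σ.symm r : ℕ) + 1 = (j : ℕ) ∨ (j : ℕ) + 1 = (σ.symm r : ℕ))
      then insert (σ.symm r) D else D)
    ∅

namespace SimpleGraph

variable {V : Type*} [DecidableEq V] (G : SimpleGraph V) [DecidableRel G.Adj]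

def greedyStep (D : Finset V) (v : V) : Finset V :=
  if ∀ u ∈ D, ¬G.Adj v u then insert v D else D

def greedyIndepSet (l : List V) : Finset V :=
  l.foldl G.greedyStep ∅

variable {G}

theorem subset_greedyStep (D : Finset V) (v : V) : D ⊆ G.greedyStep D v := by
  unfold greedyStep
  split_ifs
  exacts [Finset.subset_insert v D, subset_rfl]

theorem subset_foldl_greedyStep (l : List V) (D : Finset V) : D ⊆ l.foldl G.greedyStep D := by
  induction l generalizing D with
  | nil => exact subset_rfl
  | cons v l ih => exact (subset_greedyStep D v).trans (ih _)

theorem foldl_greedyStep_subset (l : List V) (D : Finset V) :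
    l.foldl G.greedyStep D ⊆ D ∪ l.toFinset := by
  induction l generalizing D with
  | nil => simp
  | cons v l ih =>
    refine (ih _).trans (Finset.union_subset ?_ ?_)
    · unfold greedyStep
      split_ifs
      · intro u hu
        rcases Finset.mem_insert.mp hu with rfl | hu <;> simp [*]
      · exact Finset.subset_union_left
    · intro u hu
      simp_all

theorem isIndepSet_foldl_greedyStep (l : List V) {D : Finset V} (hD : G.IsIndepSet (D : Set V)) :
    G.IsIndepSet ((l.foldl G.greedyStep D : Finset V) : Set V) := by
  induction l generalizing D with
  | nil => exact hD
  | cons v l ih =>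
    refine ih ?_
    unfold greedyStep
    split_ifs with hv
    · rw [Finset.coe_insert, IsIndepSet, Set.pairwise_insert]
      exact ⟨hD, fun u hu _ => ⟨hv u hu, fun h => hv u hu h.symm⟩⟩
    · exact hD

theorem mem_or_exists_adj_foldl_greedyStep (l : List V) (D : Finset V) {v : V} (hv : v ∈ l) :
    v ∈ l.foldl G.greedyStep D ∨ ∃ u ∈ l.foldl G.greedyStep D, G.Adj v u := by
  induction l generalizing D with
  | nil => simp at hv
  | cons w l ih =>
    rcases List.mem_cons.mp hv with rfl | hv
    · rw [List.foldl_cons]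
      have hsub := subset_foldl_greedyStep (G := G) l (G.greedyStep D v)
      by_cases hfree : ∀ u ∈ D, ¬G.Adj v u
      · left
        apply hsub
        rw [greedyStep, if_pos hfree]
        exact Finset.mem_insert_self v D
      · push Not at hfree
        obtain ⟨u, hu, hvu⟩ := hfree
        exact Or.inr ⟨u, hsub (subset_greedyStep D v hu), hvu⟩
    · exact ih _ hv

theorem isIndepSet_greedyIndepSet (l : List V) : G.IsIndepSet (G.greedyIndepSet l : Set V) :=
  isIndepSet_foldl_greedyStep l (by simp)

theorem exists_adj_of_notMem_greedyIndepSet {l : List V} {v : V} (hv : v ∈ l)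
    (hvS : v ∉ G.greedyIndepSet l) : ∃ u ∈ G.greedyIndepSet l, G.Adj v u :=
  (mem_or_exists_adj_foldl_greedyStep l ∅ hv).resolve_left hvS

theorem mem_greedyIndepSet_append_cons {l₁ l₂ : List V} {v : V}
    (hv : ∀ u, G.Adj v u → u ∉ l₁) : v ∈ G.greedyIndepSet (l₁ ++ v :: l₂) := by
  have hfree : ∀ u ∈ G.greedyIndepSet l₁, ¬G.Adj v u := fun u hu hvu => by
    simpa [hv u hvu] using foldl_greedyStep_subset l₁ ∅ hu
  rw [greedyIndepSet, List.foldl_append, List.foldl_cons]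
  refine subset_foldl_greedyStep l₂ _ ?_
  rw [greedyStep, ← greedyIndepSet, if_pos hfree]
  exact Finset.mem_insert_self v _

variable {k : ℕ}

/-- `List.ofFn σ.symm` lists the vertices by increasing rank `σ`. -/
theorem mem_greedyIndepSet_ofFn_of_forall_adj_lt (σ : V ≃ Fin k) {v : V}
    (hv : ∀ u, G.Adj v u → σ v < σ u) : v ∈ G.greedyIndepSet (List.ofFn σ.symm) := by
  set l := List.ofFn σ.symm
  have hlen : (σ v : ℕ) < l.length := by simp [l]
  have hsplit : l = l.take (σ v) ++ v :: l.drop (σ v + 1) := by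
    conv_lhs => rw [← List.take_append_drop (σ v) l, List.drop_eq_getElem_cons hlen]
    simp [l]
  rw [hsplit]
  refine mem_greedyIndepSet_append_cons fun u hvu hu => ?_
  obtain ⟨i, hi, rfl⟩ := List.mem_take_iff_getElem.mp hu
  have := hv _ hvu
  simp only [l, List.getElem_ofFn, Equiv.apply_symm_apply, Fin.lt_def] at this
  omega

section EndVertex

variable {a b : V} (hab : G.Adj a b) (hnbr : ∀ u, G.Adj a u → u = b)
include hab hnbr

theorem xor_mem_greedyIndepSet {l : List V} (ha : a ∈ l) :
    Xor (a ∈ G.greedyIndepSet l) (b ∈ G.greedyIndepSet l) := by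
  by_cases hb : b ∈ G.greedyIndepSet l
  · exact Or.inr ⟨hb, fun ha' => isIndepSet_greedyIndepSet l ha' hb hab.ne hab⟩
  · refine Or.inl ⟨by_contra fun ha' => ?_, hb⟩
    obtain ⟨u, hu, hau⟩ := exists_adj_of_notMem_greedyIndepSet ha ha'
    exact hb (hnbr u hau ▸ hu)

theorem lt_of_mem_greedyIndepSet_ofFn (σ : V ≃ Fin k)
    (hb : b ∈ G.greedyIndepSet (List.ofFn σ.symm)) : σ b < σ a := by
  refine lt_of_le_of_ne (not_lt.mp fun hlt => ?_) (σ.injective.ne hab.ne.symm)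
  have ha := mem_greedyIndepSet_ofFn_of_forall_adj_lt σ fun u hau => hnbr u hau ▸ hlt
  exact isIndepSet_greedyIndepSet _ ha hb hab.ne hab

end EndVertex

end SimpleGraph

open SimpleGraph

instance (k : ℕ) : DecidableRel (pathGraph k).Adj := fun _ _ => decidable_of_iff' _ pathGraph_adj

theorem pathGreedy_eq_greedyIndepSet (k : ℕ) (σ : Equiv.Perm (Fin k)) :
    pathGreedy k σ = (pathGraph k).greedyIndepSet (List.ofFn σ.symm) := by
  simp only [pathGreedy, greedyIndepSet, greedyStep, List.ofFn_eq_map, List.foldl_map,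
    pathGraph_adj]

theorem end_vertex_beats_neighbour (k : ℕ) (hk : 2 ≤ k) :
    (∀ σ : Equiv.Perm (Fin k),
        Xor' ((⟨0, by omega⟩ : Fin k) ∈ pathGreedy k σ)
             ((⟨1, hk⟩ : Fin k) ∈ pathGreedy k σ)) ∧
    (Finset.univ.filter
        (fun σ : Equiv.Perm (Fin k) => (⟨1, hk⟩ : Fin k) ∈ pathGreedy k σ)).card ≤
      (Finset.univ.filter
        (fun σ : Equiv.Perm (Fin k) => (⟨0, by omega⟩ : Fin k) ∈ pathGreedy k σ)).card := by
  set a : Fin k := ⟨0, by omega⟩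
  set b : Fin k := ⟨1, hk⟩
  have hab : (pathGraph k).Adj a b := by simp [pathGraph_adj, a, b]
  have hnbr : ∀ u, (pathGraph k).Adj a u → u = b := fun u hau => by
    rw [pathGraph_adj] at hau
    ext
    simp only [a, b] at hau ⊢
    omega
  simp only [pathGreedy_eq_greedyIndepSet]
  refine ⟨fun σ => xor_mem_greedyIndepSet hab hnbr (List.mem_ofFn.mpr ⟨σ a, by simp⟩), ?_⟩
  refine Finset.card_le_card_of_injOn (· * Equiv.swap a b) (fun σ hσ => ?_)
    (mul_left_injective _).injOn
  simp only [Finset.coe_filter, Finset.mem_univ, true_and, Set.mem_ofPred_eq] at hσ ⊢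
  refine mem_greedyIndepSet_ofFn_of_forall_adj_lt _ fun u hau => ?_
  simpa [hnbr u hau] using lt_of_mem_greedyIndepSet_ofFn hab hnbr σ hσ
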